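/- If V₁ and V₂ are S-equivalent square integer matrices, then σ(V₂ + V₂ᵀ) = σ(V₁ + V₁ᵀ), i.e. the signature of the symmetrization is an invariant of S-equivalence. -/

import Mathlib

open Matrix

/-- The signature of a real symmetric (= Hermitian) matrix: the number of positive
eigenvalues minus the number of negative eigenvalues, counted with multiplicity.
(Defined to be `0` on non-symmetric matrices.) -/
noncomputable def signature {n : Type*} [Fintype n] [DecidableEq n]
    (A : Matrix n n ℝ) : ℤ :=
  if hA : A.IsHermitian then
    ((Finset.univ.filter fun i => 0 < hA.eigenvalues i).card : ℤ) -
    ((Finset.univ.filter fun i => hA.eigenvalues i < 0).card : ℤ)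
  else 0

/-- The row-type elementary enlargement `W = [[V, 0, 0], [a, 0, 0], [0, 1, 0]]`,
as an `(n+2) × (n+2)` matrix. -/
def rowEnlarge {n : ℕ} (V : Matrix (Fin n) (Fin n) ℤ) (a : Fin n → ℤ) :
    Matrix (Fin (n + 2)) (Fin (n + 2)) ℤ :=
  Matrix.reindex finSumFinEquiv finSumFinEquiv
    (Matrix.fromBlocks V 0
      (Matrix.of fun (i : Fin 2) (j : Fin n) => if i = 0 then a j else 0)
      !![0, 0; 1, 0])

/-- The column-type elementary enlargement `W = [[V, b, 0], [0, 0, 1], [0, 0, 0]]`,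
as an `(n+2) × (n+2)` matrix. -/
def colEnlarge {n : ℕ} (V : Matrix (Fin n) (Fin n) ℤ) (b : Fin n → ℤ) :
    Matrix (Fin (n + 2)) (Fin (n + 2)) ℤ :=
  Matrix.reindex finSumFinEquiv finSumFinEquiv
    (Matrix.fromBlocks V
      (Matrix.of fun (i : Fin n) (j : Fin 2) => if j = 0 then b i else 0)
      0
      !![0, 1; 0, 0])

/-- A single step of S-equivalence: unimodular congruence, or an elementary
enlargement (row- or column-type). Elementary reductions are the reverses of
elementary enlargements. -/
inductive SStep : (Σ n : ℕ, Matrix (Fin n) (Fin n) ℤ) →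
    (Σ n : ℕ, Matrix (Fin n) (Fin n) ℤ) → Prop
  | unimodular {n : ℕ} (V P : Matrix (Fin n) (Fin n) ℤ)
      (hP : P.det = 1 ∨ P.det = -1) : SStep ⟨n, V⟩ ⟨n, P * V * Pᵀ⟩
  | row {n : ℕ} (V : Matrix (Fin n) (Fin n) ℤ) (a : Fin n → ℤ) :
      SStep ⟨n, V⟩ ⟨n + 2, rowEnlarge V a⟩
  | col {n : ℕ} (V : Matrix (Fin n) (Fin n) ℤ) (b : Fin n → ℤ) :
      SStep ⟨n, V⟩ ⟨n + 2, colEnlarge V b⟩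

/-- S-equivalence of square integer matrices: the equivalence relation generated by
unimodular congruence and elementary enlargements/reductions. -/
def SEquiv : (Σ n : ℕ, Matrix (Fin n) (Fin n) ℤ) →
    (Σ n : ℕ, Matrix (Fin n) (Fin n) ℤ) → Prop :=
  Relation.EqvGen SStep

/-!
Over `ℝ`, the signature of a symmetric matrix is `sigPos - sigNeg` of its quadratic form (the
spectral theorem exhibits it as a weighted sum of squares of its eigenvalues), so it is invariant
under congruence by invertible matrices and additive on block sums. A unimodular congruence
`V ↦ P V Pᵀ` acts on `V + Vᵀ` by the same congruence. An elementary enlargement turns `V + Vᵀ`,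
up to reordering, into `[[S, Bᵀ], [B, H]]` with `H = [[0, 1], [1, 0]]` and `Bᵀ H B = 0`; completing
the square makes this congruent to `S ⊕ H`, and the hyperbolic plane `H` has signature `0`.
-/

open QuadraticMap

lemma Set.ncard_setOf_sum {α β : Type*} [Finite α] [Finite β] (p : α ⊕ β → Prop) :
    {x | p x}.ncard = {a | p (.inl a)}.ncard + {b | p (.inr b)}.ncard := by
  simp only [← Nat.card_coe_set_eq, Set.coe_ofPred, Nat.card_congr Equiv.subtypeSum,
    Nat.card_sum]

section SignatureOfProd

variable {𝕜 M₁ M₂ : Type*} [Field 𝕜] [AddCommGroup M₁] [Module 𝕜 M₁] [FiniteDimensional 𝕜 M₁]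
  [AddCommGroup M₂] [Module 𝕜 M₂] [FiniteDimensional 𝕜 M₂]

lemma QuadraticMap.weightedSumSquares_sumElim_equivalent {ι κ : Type*} [Fintype ι] [Fintype κ]
    (w₁ : ι → 𝕜) (w₂ : κ → 𝕜) :
    (weightedSumSquares 𝕜 (Sum.elim w₁ w₂)).Equivalent
      ((weightedSumSquares 𝕜 w₁).prod (weightedSumSquares 𝕜 w₂)) :=
  ⟨{ LinearEquiv.sumArrowLequivProdArrow ι κ 𝕜 𝕜 with
      map_app' := fun x => by simp [weightedSumSquares_apply, Fintype.sum_sum_type] }⟩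

variable [LinearOrder 𝕜] [IsStrictOrderedRing 𝕜]

lemma sigPos_prod (Q₁ : QuadraticForm 𝕜 M₁) (Q₂ : QuadraticForm 𝕜 M₂) :
    sigPos (Q₁.prod Q₂) = sigPos Q₁ + sigPos Q₂ := by
  have : Invertible (2 : 𝕜) := invertibleOfNonzero two_ne_zero
  obtain ⟨w₁, e₁⟩ := Q₁.equivalent_weightedSumSquares
  obtain ⟨w₂, e₂⟩ := Q₂.equivalent_weightedSumSquares
  have e := (e₁.prod e₂).trans (weightedSumSquares_sumElim_equivalent w₁ w₂).symm
  rw [QuadraticForm.sigPos_of_equiv_weightedSumSquares e,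
    QuadraticForm.sigPos_of_equiv_weightedSumSquares e₁,
    QuadraticForm.sigPos_of_equiv_weightedSumSquares e₂, Set.ncard_setOf_sum]
  rfl

lemma sigNeg_prod (Q₁ : QuadraticForm 𝕜 M₁) (Q₂ : QuadraticForm 𝕜 M₂) :
    sigNeg (Q₁.prod Q₂) = sigNeg Q₁ + sigNeg Q₂ := by
  have : -(Q₁.prod Q₂) = (-Q₁).prod (-Q₂) := by ext; simp [add_comm]
  rw [← sigPos_neg, this, sigPos_prod, sigPos_neg, sigPos_neg]

end SignatureOfProd

namespace Matrix

variable {R ι κ : Type*} [CommRing R] [Fintype ι] [DecidableEq ι] [Fintype κ] [DecidableEq κ]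

lemma toQuadraticForm'_apply (A : Matrix ι ι R) (x : ι → R) :
    A.toQuadraticForm' x = x ⬝ᵥ A *ᵥ x := by
  simp [toQuadraticForm', toLinearMap₂'_apply']

lemma toQuadraticForm'_mul_mul_transpose (A P : Matrix ι ι R) :
    (P * A * Pᵀ).toQuadraticForm' = A.toQuadraticForm'.comp Pᵀ.mulVecLin := by
  ext x
  rw [QuadraticMap.comp_apply, mulVecLin_apply, toQuadraticForm'_apply, toQuadraticForm'_apply,
    ← mulVec_mulVec, ← mulVec_mulVec, dotProduct_mulVec x P, ← mulVec_transpose]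

lemma toQuadraticForm'_diagonal (w : ι → R) :
    (diagonal w).toQuadraticForm' = weightedSumSquares R w := by
  ext x
  simp only [toQuadraticForm'_apply, dotProduct, mulVec_diagonal, weightedSumSquares_apply,
    smul_eq_mul]
  exact Finset.sum_congr rfl fun i _ => by ring

lemma toQuadraticForm'_fromBlocks_zero (A : Matrix ι ι R) (B : Matrix κ κ R) :
    (fromBlocks A 0 0 B).toQuadraticForm' =
      (A.toQuadraticForm'.prod B.toQuadraticForm').comp
        (LinearEquiv.sumArrowLequivProdArrow ι κ R R).toLinearMap := by
  ext x
  simp only [QuadraticMap.comp_apply, LinearEquiv.coe_coe, QuadraticMap.prod_apply,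
    toQuadraticForm'_apply, dotProduct, fromBlocks_mulVec, zero_mulVec, add_zero, zero_add,
    Fintype.sum_sum_type, Sum.elim_inl, Sum.elim_inr]
  rfl

lemma toQuadraticForm'_reindex (e : ι ≃ κ) (A : Matrix ι ι R) :
    (reindex e e A).toQuadraticForm' =
      A.toQuadraticForm'.comp (LinearEquiv.funCongrLeft R R e).toLinearMap := by
  ext x
  simp only [QuadraticMap.comp_apply, toQuadraticForm'_apply, dotProduct, mulVec, reindex_apply,
    submatrix_apply, LinearEquiv.coe_coe, LinearEquiv.funCongrLeft_apply]
  rw [← e.symm.sum_comp]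
  refine Finset.sum_congr rfl fun i _ => ?_
  rw [← e.symm.sum_comp]
  simp

lemma toQuadraticForm'_mul_mul_transpose_equivalent (A : Matrix ι ι R) {P : Matrix ι ι R}
    (hP : IsUnit P.det) : (P * A * Pᵀ).toQuadraticForm'.Equivalent A.toQuadraticForm' := by
  have : Invertible Pᵀ := invertibleOfIsUnitDet _ (by rwa [det_transpose])
  rw [toQuadraticForm'_mul_mul_transpose]
  exact ⟨(isometryEquivOfCompLinearEquiv _ (toLinearEquiv' Pᵀ this)).symm⟩

lemma IsHermitian.toQuadraticForm'_equivalent {A : Matrix ι ι ℝ} (hA : A.IsHermitian) :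
    A.toQuadraticForm'.Equivalent (weightedSumSquares ℝ hA.eigenvalues) := by
  set U : Matrix ι ι ℝ := (hA.eigenvectorUnitary : Matrix ι ι ℝ)
  have hA' : A = U * diagonal hA.eigenvalues * Uᵀ := by
    conv_lhs => rw [hA.spectral_theorem]
    simp [U, star_eq_conjTranspose, conjTranspose_eq_transpose_of_trivial]
  have hU : IsUnit U.det := UnitaryGroup.det_isUnit _
  have := toQuadraticForm'_mul_mul_transpose_equivalent (diagonal hA.eigenvalues) hU
  rwa [← hA', toQuadraticForm'_diagonal] at this

lemma IsHermitian.signature_eq_sigPos_sub_sigNeg {A : Matrix ι ι ℝ} (hA : A.IsHermitian) :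
    signature A = sigPos A.toQuadraticForm' - sigNeg A.toQuadraticForm' := by
  rw [signature, dif_pos hA,
    QuadraticForm.sigPos_of_equiv_weightedSumSquares hA.toQuadraticForm'_equivalent,
    QuadraticForm.sigNeg_of_equiv_weightedSumSquares hA.toQuadraticForm'_equivalent,
    Set.ncard_eq_toFinset_card', Set.ncard_eq_toFinset_card', Set.toFinset_ofPred,
    Set.toFinset_ofPred]

lemma signature_eq_of_equivalent {A : Matrix ι ι ℝ} {B : Matrix κ κ ℝ} (hA : A.IsHermitian)
    (hB : B.IsHermitian) (h : A.toQuadraticForm'.Equivalent B.toQuadraticForm') :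
    signature A = signature B := by
  rw [hA.signature_eq_sigPos_sub_sigNeg, hB.signature_eq_sigPos_sub_sigNeg, h.sigPos_eq,
    h.sigNeg_eq]

lemma signature_mul_mul_transpose {A : Matrix ι ι ℝ} (hA : A.IsHermitian)
    {P : Matrix ι ι ℝ} (hP : IsUnit P.det) : signature (P * A * Pᵀ) = signature A := by
  refine signature_eq_of_equivalent ?_ hA (toQuadraticForm'_mul_mul_transpose_equivalent A hP)
  simpa [conjTranspose_eq_transpose_of_trivial] using isHermitian_mul_mul_conjTranspose P hA

lemma signature_reindex (e : ι ≃ κ) (A : Matrix ι ι ℝ) :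
    signature (reindex e e A) = signature A := by
  by_cases hA : A.IsHermitian
  · refine signature_eq_of_equivalent (hA.submatrix _) hA ?_
    rw [toQuadraticForm'_reindex]
    exact ⟨(isometryEquivOfCompLinearEquiv _ _).symm⟩
  · have hA' : ¬(reindex e e A).IsHermitian := by
      rwa [reindex_apply, isHermitian_submatrix_equiv]
    rw [signature, signature, dif_neg hA, dif_neg hA']

lemma signature_fromBlocks_zero {A : Matrix ι ι ℝ} {B : Matrix κ κ ℝ}
    (hA : A.IsHermitian) (hB : B.IsHermitian) :
    signature (fromBlocks A 0 0 B) = signature A + signature B := by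
  have hAB : (fromBlocks A 0 0 B).IsHermitian := hA.fromBlocks (by simp) hB
  have e : (fromBlocks A 0 0 B).toQuadraticForm'.Equivalent
      (A.toQuadraticForm'.prod B.toQuadraticForm') := by
    rw [toQuadraticForm'_fromBlocks_zero]
    exact ⟨(isometryEquivOfCompLinearEquiv _ _).symm⟩
  rw [hAB.signature_eq_sigPos_sub_sigNeg, hA.signature_eq_sigPos_sub_sigNeg,
    hB.signature_eq_sigPos_sub_sigNeg, e.sigPos_eq, e.sigNeg_eq, sigPos_prod, sigNeg_prod]
  push_cast
  ring

-- Haynsworth's inertia additivity: the block LDLᵀ factorization is a congruence.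
lemma signature_fromBlocks_of_invertible {S : Matrix ι ι ℝ} {H : Matrix κ κ ℝ} [Invertible H]
    (hS : S.IsHermitian) (hH : H.IsHermitian) (B : Matrix κ ι ℝ) :
    signature (fromBlocks S Bᵀ B H) = signature (S - Bᵀ * ⅟H * B) + signature H := by
  have hH' : (⅟H).IsHermitian := by rw [invOf_eq_nonsing_inv]; exact hH.inv
  have hSchur : (S - Bᵀ * ⅟H * B).IsHermitian := by
    simpa [conjTranspose_eq_transpose_of_trivial] using
      hS.sub (isHermitian_conjTranspose_mul_mul B hH')
  set L : Matrix (ι ⊕ κ) (ι ⊕ κ) ℝ := fromBlocks 1 (Bᵀ * ⅟H) 0 1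
  have hL : Lᵀ = fromBlocks 1 0 (⅟H * B) 1 := by
    simp [L, fromBlocks_transpose, transpose_nonsing_inv, (isHermitian_iff_isSymm.mp hH).eq]
  have hLdet : IsUnit L.det := by simp [L]
  rw [fromBlocks_eq_of_invertible₂₂, ← hL,
    signature_mul_mul_transpose (hSchur.fromBlocks (by simp) hH) hLdet,
    signature_fromBlocks_zero hSchur hH]

lemma signature_diagonal (w : ι → ℝ) :
    signature (diagonal w) = {i | 0 < w i}.ncard - {i | w i < 0}.ncard := by
  rw [(isHermitian_diagonal w).signature_eq_sigPos_sub_sigNeg, toQuadraticForm'_diagonal,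
    QuadraticForm.sigPos_weightedSumSquares, QuadraticForm.sigNeg_weightedSumSquares]

lemma signature_hyperbolic : signature !![(0 : ℝ), 1; 1, 0] = 0 := by
  have hP : IsUnit (!![(1 : ℝ), 1; 1, -1]).det := by norm_num [det_fin_two]
  have hH : !![(0 : ℝ), 1; 1, 0] =
      !![1, 1; 1, -1] * diagonal ![2⁻¹, -2⁻¹] * !![1, 1; 1, -1]ᵀ := by
    ext i j
    fin_cases i <;> fin_cases j <;>
      simp [mul_apply, Fin.sum_univ_two, diagonal_fin_two] <;> norm_num
  have hpos : {i | 0 < ![(2 : ℝ)⁻¹, -2⁻¹] i} = {0} := by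
    ext i; fin_cases i <;> norm_num
  have hneg : {i | ![(2 : ℝ)⁻¹, -2⁻¹] i < 0} = {1} := by
    ext i; fin_cases i <;> norm_num
  rw [hH, signature_mul_mul_transpose (isHermitian_diagonal _) hP, signature_diagonal, hpos, hneg,
    Set.ncard_singleton, Set.ncard_singleton, sub_self]

lemma signature_fromBlocks_hyperbolic {S : Matrix ι ι ℝ} (hS : S.IsHermitian) (c : ι → ℝ) :
    signature (fromBlocks S (of ![c, 0])ᵀ (of ![c, 0]) !![0, 1; 1, 0]) = signature S := by
  set H : Matrix (Fin 2) (Fin 2) ℝ := !![0, 1; 1, 0]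
  have hHH : H * H = 1 := by ext i j; fin_cases i <;> fin_cases j <;> simp [H]
  let : Invertible H := ⟨H, hHH, hHH⟩
  have hH : H.IsHermitian := by ext i j; fin_cases i <;> fin_cases j <;> simp [H]
  -- `of ![c, 0]` vanishes outside row `0`, and `H 0 0 = 0`.
  have hBHB : (of ![c, 0])ᵀ * ⅟H * of ![c, 0] = 0 := by
    change (of ![c, 0])ᵀ * H * of ![c, 0] = 0
    ext i j; simp [H, mul_apply, Fin.sum_univ_two]
  rw [signature_fromBlocks_of_invertible hS hH, hBHB, sub_zero, signature_hyperbolic, add_zero]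

end Matrix

section SEquivalence

variable {ι : Type*}

def symmReal (V : Matrix ι ι ℤ) : Matrix ι ι ℝ := (V + Vᵀ).map (Int.cast : ℤ → ℝ)

lemma isHermitian_symmReal (V : Matrix ι ι ℤ) : (symmReal V).IsHermitian := by
  rw [isHermitian_iff_isSymm, IsSymm, symmReal, ← transpose_map, transpose_add,
    transpose_transpose, add_comm]

lemma symmReal_mul_mul_transpose [Fintype ι] (V P : Matrix ι ι ℤ) :
    symmReal (P * V * Pᵀ) =
      P.map (Int.cast : ℤ → ℝ) * symmReal V * (P.map (Int.cast : ℤ → ℝ))ᵀ := by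
  have : P * V * Pᵀ + (P * V * Pᵀ)ᵀ = P * (V + Vᵀ) * Pᵀ := by
    simp [transpose_mul, mul_add, add_mul, mul_assoc]
  simp only [symmReal, this, ← Int.coe_castRingHom, Matrix.map_mul, transpose_map]

lemma signature_symmReal_mul_mul_transpose [Fintype ι] [DecidableEq ι] (V : Matrix ι ι ℤ)
    {P : Matrix ι ι ℤ} (hP : IsUnit P.det) :
    signature (symmReal (P * V * Pᵀ)) = signature (symmReal V) := by
  rw [symmReal_mul_mul_transpose]
  refine signature_mul_mul_transpose (isHermitian_symmReal V) ?_
  have hdet : (P.map (Int.cast : ℤ → ℝ)).det = P.det :=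
    (RingHom.map_det (Int.castRingHom ℝ) P).symm
  rw [hdet]
  exact hP.map (Int.castRingHom ℝ)

lemma symmReal_transpose (V : Matrix ι ι ℤ) : symmReal Vᵀ = symmReal V := by
  rw [symmReal, symmReal, transpose_transpose, add_comm]

lemma symmReal_reindex {κ : Type*} (e : ι ≃ κ) (N : Matrix ι ι ℤ) :
    symmReal (reindex e e N) = reindex e e (symmReal N) := by
  ext i j
  simp [symmReal]

lemma symmReal_rowEnlarge {n : ℕ} (V : Matrix (Fin n) (Fin n) ℤ) (a : Fin n → ℤ) :
    symmReal (rowEnlarge V a) = reindex finSumFinEquiv finSumFinEquiv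
      (fromBlocks (symmReal V) (of ![Int.cast ∘ a, 0])ᵀ (of ![Int.cast ∘ a, 0])
        !![0, 1; 1, 0]) := by
  rw [rowEnlarge, symmReal_reindex]
  congr 1
  ext (i | i) (j | j)
  · simp [symmReal]
  · fin_cases j <;> simp [symmReal]
  · fin_cases i <;> simp [symmReal]
  · fin_cases i <;> fin_cases j <;> simp [symmReal]

lemma signature_symmReal_rowEnlarge {n : ℕ} (V : Matrix (Fin n) (Fin n) ℤ) (a : Fin n → ℤ) :
    signature (symmReal (rowEnlarge V a)) = signature (symmReal V) := by
  rw [symmReal_rowEnlarge, signature_reindex,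
    signature_fromBlocks_hyperbolic (isHermitian_symmReal V)]

lemma colEnlarge_eq_transpose_rowEnlarge {n : ℕ} (V : Matrix (Fin n) (Fin n) ℤ)
    (b : Fin n → ℤ) : colEnlarge V b = (rowEnlarge Vᵀ b)ᵀ := by
  rw [colEnlarge, rowEnlarge, transpose_reindex, fromBlocks_transpose, transpose_transpose,
    transpose_zero]
  congr 2
  ext i j
  fin_cases i <;> fin_cases j <;> rfl

lemma signature_symmReal_colEnlarge {n : ℕ} (V : Matrix (Fin n) (Fin n) ℤ) (b : Fin n → ℤ) :
    signature (symmReal (colEnlarge V b)) = signature (symmReal V) := by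
  rw [colEnlarge_eq_transpose_rowEnlarge, symmReal_transpose, signature_symmReal_rowEnlarge,
    symmReal_transpose]

lemma SStep.signature_symmReal_eq {x y : Σ n : ℕ, Matrix (Fin n) (Fin n) ℤ} (h : SStep x y) :
    signature (symmReal x.2) = signature (symmReal y.2) := by
  symm
  cases h with
  | unimodular V P hP =>
    exact signature_symmReal_mul_mul_transpose V (by rcases hP with h | h <;> simp [h])
  | row V a => exact signature_symmReal_rowEnlarge V a
  | col V b => exact signature_symmReal_colEnlarge V b

end SEquivalence

/-- If `V₁` and `V₂` are S-equivalent, then `σ(V₂ + V₂ᵀ) = σ(V₁ + V₁ᵀ)`: the signature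
of the symmetrization is an invariant of S-equivalence. -/
theorem signature_of_SEquiv {m n : ℕ}
    (V₁ : Matrix (Fin m) (Fin m) ℤ) (V₂ : Matrix (Fin n) (Fin n) ℤ)
    (h : SEquiv ⟨m, V₁⟩ ⟨n, V₂⟩) :
    signature ((V₂ + V₂ᵀ).map (Int.cast : ℤ → ℝ))
      = signature ((V₁ + V₁ᵀ).map (Int.cast : ℤ → ℝ)) := by
  have hinv : Equivalence fun x y : Σ n : ℕ, Matrix (Fin n) (Fin n) ℤ =>
      signature (symmReal x.2) = signature (symmReal y.2) :=
    ⟨fun _ => rfl, Eq.symm, Eq.trans⟩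
  exact (hinv.eqvGen_iff.mp (h.mono fun _ _ => SStep.signature_symmReal_eq)).symm
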